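/- Let N = p + ℓ with p, ℓ ≥ 1, let U, Û ∈ ℝ^{N×r} each have orthonormal columns, and partition them into Υ_f, Υ̂_f ∈ ℝ^{p×r} (first p rows) and Υ_l, Υ̂_l ∈ ℝ^{p×r} (last p rows). Let Z ∈ ℝ^{r×r} be orthogonal, and assume rank(Υ_f) = rank(Υ̂_f) = r. Set A_r = Υ_f^† Υ_l and Â_r = Υ̂_f^† Υ̂_l. Then ‖A_r − Z Â_r Zᵀ‖₂ ≤ ‖Υ_f^†‖₂ · ‖U − Û Zᵀ‖₂ · (1 + √2 ‖Υ̂_f^†‖₂). -/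

import Mathlib

open Matrix

/-- The spectral (operator 2-) norm of a real matrix. -/
noncomputable def spNorm {m n : ℕ} (M : Matrix (Fin m) (Fin n) ℝ) : ℝ :=
  ‖LinearMap.toContinuousLinearMap (Matrix.toEuclideanLin M)‖

/-- The Moore–Penrose pseudoinverse of a full-column-rank real matrix,
`M^† = (MᵀM)⁻¹Mᵀ`. -/
noncomputable def pinv {m n : ℕ} (M : Matrix (Fin m) (Fin n) ℝ) : Matrix (Fin n) (Fin m) ℝ :=
  (Mᵀ * M)⁻¹ * Mᵀ

/-- The submatrix of the first `p` rows of a `(p+l) × r` matrix. -/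
def firstRows {p l r : ℕ} (U : Matrix (Fin (p + l)) (Fin r) ℝ) : Matrix (Fin p) (Fin r) ℝ :=
  U.submatrix (fun i => Fin.castAdd l i) id

/-- The submatrix of the last `p` rows of a `(p+l) × r` matrix. -/
def lastRows {p l r : ℕ} (U : Matrix (Fin (p + l)) (Fin r) ℝ) : Matrix (Fin p) (Fin r) ℝ :=
  U.submatrix (fun i => Fin.addNat i l) id

/-!
Since `Υ_f^† Υ_f = 1`, the error splits as `Υ_f^† (Υ_l - Υ'_l) + (Υ_f^† - Υ'_f^†) Υ'_l`,
where `Υ'` are the blocks of `Û Zᵀ`; rotating `Û` by `Zᵀ` turns `Â_r` into `Z Â_r Zᵀ` and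
does not increase `‖Υ̂_f^†‖`. The second term is controlled by Wedin's bound
`‖F^† - F'^†‖ ≤ √2 ‖F^†‖ ‖F'^†‖ ‖F - F'‖` for matrices of full column rank. It comes from
`F^† - F'^† = F^† ((F' - F) F'^† + P (1 - Q))`, with `P`, `Q` the orthogonal projections
onto the column spaces: the two summands have orthogonal row spaces, so the C*-identity
bounds the norm of their sum by `√2` times the larger one, and
`‖P (1 - Q)‖ ≤ ‖(1 - P) Q‖ = ‖(1 - P) (F' - F) F'^†‖` because both column spaces have the
same dimension.
-/

open scoped Matrix.Norms.L2Operator RealInnerProductSpace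

lemma one_sub_sq_mul_sq_le_of_sq_le_mul {a b c t : ℝ} (hca : (1 - t ^ 2) * c ^ 2 ≤ a ^ 2)
    (hab : a ^ 2 ≤ b * c) : (1 - t ^ 2) * a ^ 2 ≤ b ^ 2 := by
  rcases le_or_gt (1 - t ^ 2) 0 with ht | ht
  · nlinarith [sq_nonneg a, sq_nonneg b]
  rcases (sq_nonneg a).eq_or_lt with ha | ha
  · rw [← ha]
    nlinarith [sq_nonneg b]
  have : (1 - t ^ 2) * a ^ 2 * a ^ 2 ≤ b ^ 2 * a ^ 2 :=
    calc (1 - t ^ 2) * a ^ 2 * a ^ 2 = (1 - t ^ 2) * (a ^ 2) ^ 2 := by ring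
      _ ≤ (1 - t ^ 2) * (b * c) ^ 2 := by gcongr
      _ = b ^ 2 * ((1 - t ^ 2) * c ^ 2) := by ring
      _ ≤ b ^ 2 * a ^ 2 := by gcongr
  exact le_of_mul_le_mul_right this ha

section CStarRing

variable {A : Type*} [NonUnitalNormedRing A] [StarRing A] [CStarRing A]

lemma norm_add_sq_le_of_mul_star_eq_zero {a b : A} (hab : a * star b = 0) :
    ‖a + b‖ ^ 2 ≤ ‖a‖ ^ 2 + ‖b‖ ^ 2 := by
  have hba : b * star a = 0 := by simpa using congrArg star hab
  have hsum : (a + b) * star (a + b) = a * star a + b * star b := by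
    simp only [star_add, mul_add, add_mul, hab, hba, add_zero, zero_add]
  calc ‖a + b‖ ^ 2 = ‖a * star a + b * star b‖ := by
        rw [sq, ← CStarRing.norm_self_mul_star, hsum]
    _ ≤ ‖a * star a‖ + ‖b * star b‖ := norm_add_le _ _
    _ = ‖a‖ ^ 2 + ‖b‖ ^ 2 := by simp only [CStarRing.norm_self_mul_star, sq]

end CStarRing

section InnerProductSpace

variable {E : Type*} [NormedAddCommGroup E] [InnerProductSpace ℝ E] [CompleteSpace E]

lemma IsStarProjection.inner_apply_left {P : E →L[ℝ] E} (hP : IsStarProjection P) (x y : E) :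
    ⟪P x, y⟫ = ⟪x, P y⟫ :=
  hP.isSelfAdjoint.isSymmetric x y

lemma IsStarProjection.norm_sq_eq_add_norm_sq_apply {P : E →L[ℝ] E} (hP : IsStarProjection P)
    (x : E) : ‖x‖ ^ 2 = ‖P x‖ ^ 2 + ‖x - P x‖ ^ 2 := by
  have hPP : P (P x) = P x := congr($(hP.isIdempotentElem.eq) x)
  have horth : ⟪P x, x - P x⟫ = 0 := by
    rw [inner_sub_right, hP.inner_apply_left x (P x), hPP, real_inner_comm, sub_self]
  have := norm_add_sq_eq_norm_sq_add_norm_sq_real horth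
  rw [add_sub_cancel] at this
  simpa only [sq] using this

theorem IsStarProjection.norm_one_sub_mul_le {P Q R : E →L[ℝ] E} (hP : IsStarProjection P)
    (hQ : IsStarProjection Q) (hPR : P * R = P) (hQR : Q * R = R) :
    ‖(1 - Q) * P‖ ≤ ‖(1 - P) * Q‖ := by
  set t := ‖(1 - P) * Q‖
  have ht : 0 ≤ t := norm_nonneg _
  refine ContinuousLinearMap.opNorm_le_bound _ ht fun x => ?_
  set y := P x
  set z := R x
  have hPy : P y = y := congr($(hP.isIdempotentElem.eq) x)
  have hPz : P z = y := congr($hPR x)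
  have hQz : Q z = z := congr($hQR x)
  have hzy : ‖z - y‖ ≤ t * ‖z‖ := by
    have : ((1 - P) * Q) z = z - y := by simp [hQz, hPz]
    exact this ▸ ((1 - P) * Q).le_opNorm z
  have hz : ‖z‖ ^ 2 = ‖y‖ ^ 2 + ‖z - y‖ ^ 2 := hPz ▸ hP.norm_sq_eq_add_norm_sq_apply z
  have hy : ‖y‖ ^ 2 = ‖Q y‖ ^ 2 + ‖y - Q y‖ ^ 2 := hQ.norm_sq_eq_add_norm_sq_apply y
  have hyx : ‖y‖ ≤ ‖x‖ :=
    (P.le_of_opNorm_le (hP.norm_le _) x).trans_eq (one_mul _)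
  -- `z` is a preimage of `y` under `P` inside the range of `Q`, so `⟪Q y, z⟫ = ‖y‖ ^ 2`.
  have hcs : ‖y‖ ^ 2 ≤ ‖Q y‖ * ‖z‖ := by
    have : ⟪Q y, z⟫ = ‖y‖ ^ 2 := by
      rw [hQ.inner_apply_left, hQz, ← hPy, hP.inner_apply_left, hPz, hPy,
        real_inner_self_eq_norm_sq]
    exact this ▸ real_inner_le_norm _ _
  have hz' : (1 - t ^ 2) * ‖z‖ ^ 2 ≤ ‖y‖ ^ 2 := by
    nlinarith [mul_le_mul hzy hzy (norm_nonneg _) (by positivity)]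
  have hQy := one_sub_sq_mul_sq_le_of_sq_le_mul hz' hcs
  have hfinal : ‖y - Q y‖ ≤ t * ‖y‖ :=
    (sq_le_sq₀ (norm_nonneg _) (by positivity)).1 (by rw [mul_pow]; linarith)
  calc ‖((1 - Q) * P) x‖ = ‖y - Q y‖ := by simp [y]
    _ ≤ t * ‖y‖ := hfinal
    _ ≤ t * ‖x‖ := by gcongr

end InnerProductSpace

namespace Matrix

section L2OpNorm

variable {𝕜 : Type*} [RCLike 𝕜] {m n k : Type*} [Fintype m] [Fintype n] [Fintype k]
  [DecidableEq n]

lemma l2_opNorm_le_one_of_conjTranspose_mul_self_eq_one {A : Matrix m n 𝕜} (hA : Aᴴ * A = 1) :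
    ‖A‖ ≤ 1 := by
  have h := l2_opNorm_conjTranspose_mul_self A
  rw [hA] at h
  nlinarith [(IsStarProjection.one (Matrix n n 𝕜)).norm_le _, norm_nonneg A]

lemma l2_opNorm_submatrix_le [DecidableEq m] [DecidableEq k] (A : Matrix m n 𝕜) {f : k → m}
    (hf : Function.Injective f) : ‖A.submatrix f id‖ ≤ ‖A‖ := by
  set S : Matrix k m 𝕜 := (1 : Matrix m m 𝕜).submatrix f id
  have hA : A.submatrix f id = S * A := by
    simpa [S] using submatrix_mul (1 : Matrix m m 𝕜) A f id id Function.bijective_id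
  have hS : Sᴴᴴ * Sᴴ = 1 := by
    rw [conjTranspose_conjTranspose, conjTranspose_submatrix, conjTranspose_one,
      ← submatrix_mul _ _ _ _ _ Function.bijective_id, one_mul, submatrix_one _ hf]
  calc ‖A.submatrix f id‖ ≤ ‖S‖ * ‖A‖ := hA ▸ l2_opNorm_mul S A
    _ ≤ 1 * ‖A‖ := by
        gcongr
        exact l2_opNorm_conjTranspose S ▸ l2_opNorm_le_one_of_conjTranspose_mul_self_eq_one hS
    _ = ‖A‖ := one_mul _

end L2OpNorm

theorem norm_one_sub_mul_le_of_mul_eq {n : Type*} [Fintype n] [DecidableEq n]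
    {P Q R : Matrix n n ℝ} (hP : IsStarProjection P) (hQ : IsStarProjection Q)
    (hPR : P * R = P) (hQR : Q * R = R) : ‖(1 - Q) * P‖ ≤ ‖(1 - P) * Q‖ := by
  let φ := toEuclideanCLM (𝕜 := ℝ) (n := n)
  have h := (hP.map φ).norm_one_sub_mul_le (hQ.map φ)
    (by rw [← map_mul, hPR]) (by rw [← map_mul, hQR])
  simpa only [cstar_norm_def, map_mul, map_sub, map_one] using h

lemma isUnit_transpose_mul_self_of_rank_eq {m n : Type*} [Fintype m] [Fintype n]
    [DecidableEq n] {M : Matrix m n ℝ} (hM : M.rank = Fintype.card n) : IsUnit (Mᵀ * M) := by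
  rw [← mulVec_surjective_iff_isUnit, ← coe_mulVecLin, ← LinearMap.range_eq_top]
  apply Submodule.eq_top_of_finrank_eq
  rw [← rank, rank_transpose_mul_self, hM, Module.finrank_fintype_fun_eq_card]

end Matrix

section Pinv

variable {p r : ℕ}

lemma pinv_mul_cancel {M : Matrix (Fin p) (Fin r) ℝ} (hM : IsUnit (Mᵀ * M)) :
    pinv M * M = 1 := by
  rw [pinv, Matrix.mul_assoc, nonsing_inv_mul _ ((isUnit_iff_isUnit_det _).mp hM)]

lemma isStarProjection_mul_pinv {M : Matrix (Fin p) (Fin r) ℝ} (hM : IsUnit (Mᵀ * M)) :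
    IsStarProjection (M * pinv M) where
  isIdempotentElem := by
    rw [IsIdempotentElem, Matrix.mul_assoc, ← Matrix.mul_assoc (pinv M), pinv_mul_cancel hM,
      Matrix.one_mul]
  isSelfAdjoint := by
    rw [IsSelfAdjoint, star_eq_conjTranspose, conjTranspose_eq_transpose_of_trivial, pinv,
      transpose_mul, transpose_mul, transpose_transpose, transpose_nonsing_inv, transpose_mul,
      transpose_transpose, Matrix.mul_assoc]

lemma one_sub_mul_pinv_mul_self {M : Matrix (Fin p) (Fin r) ℝ} (hM : IsUnit (Mᵀ * M)) :
    (1 - M * pinv M) * M = 0 := by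
  rw [Matrix.sub_mul, Matrix.one_mul, Matrix.mul_assoc, pinv_mul_cancel hM, Matrix.mul_one,
    sub_self]

lemma pinv_mul_one_sub_mul_pinv {M : Matrix (Fin p) (Fin r) ℝ} (hM : IsUnit (Mᵀ * M)) :
    pinv M * (1 - M * pinv M) = 0 := by
  rw [Matrix.mul_sub, Matrix.mul_one, ← Matrix.mul_assoc, pinv_mul_cancel hM, Matrix.one_mul,
    sub_self]

lemma pinv_mul_transpose {Z : Matrix (Fin r) (Fin r) ℝ} (hZ : Zᵀ * Z = 1)
    (M : Matrix (Fin p) (Fin r) ℝ) : pinv (M * Zᵀ) = Z * pinv M := by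
  have hZinv : Z⁻¹ = Zᵀ := inv_eq_left_inv hZ
  have hZtinv : Zᵀ⁻¹ = Z := inv_eq_left_inv (mul_eq_one_comm.mp hZ)
  have hgram : (M * Zᵀ)ᵀ * (M * Zᵀ) = Z * (Mᵀ * M) * Zᵀ := by
    simp only [transpose_mul, transpose_transpose, Matrix.mul_assoc]
  rw [pinv, pinv, hgram, Matrix.mul_inv_rev, Matrix.mul_inv_rev, hZinv, hZtinv, transpose_mul,
    transpose_transpose]
  calc Z * ((Mᵀ * M)⁻¹ * Zᵀ) * (Z * Mᵀ) = Z * ((Mᵀ * M)⁻¹ * (Zᵀ * Z) * Mᵀ) := by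
        simp only [Matrix.mul_assoc]
    _ = Z * ((Mᵀ * M)⁻¹ * Mᵀ) := by rw [hZ, Matrix.mul_one]

end Pinv

section Wedin

variable {p r : ℕ} {F F' : Matrix (Fin p) (Fin r) ℝ}

lemma isUnit_pinv_mul_of_norm_lt_one (hF' : IsUnit (F'ᵀ * F'))
    (h : ‖(1 - F * pinv F) * (F' * pinv F')‖ < 1) : IsUnit (pinv F * F') := by
  rw [isUnit_iff_isUnit_det, isUnit_iff_ne_zero]
  intro hdet
  obtain ⟨v, hv, hKv⟩ := exists_mulVec_eq_zero_iff.mpr hdet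
  set W := F' * replicateCol (Fin 1) v
  have hQW : F' * pinv F' * W = W := by
    rw [Matrix.mul_assoc, ← Matrix.mul_assoc (pinv F'), pinv_mul_cancel hF', Matrix.one_mul]
  have hPW : F * pinv F * W = 0 := by
    rw [Matrix.mul_assoc, ← Matrix.mul_assoc (pinv F), ← replicateCol_mulVec, hKv,
      replicateCol_zero, Matrix.mul_zero]
  have hW : W = (1 - F * pinv F) * (F' * pinv F') * W := by
    rw [Matrix.mul_assoc, hQW, Matrix.sub_mul, Matrix.one_mul, hPW, sub_zero]
  have hW0 : W = 0 := by
    have := l2_opNorm_mul ((1 - F * pinv F) * (F' * pinv F')) W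
    rw [← hW] at this
    exact norm_eq_zero.mp (by nlinarith [norm_nonneg W])
  apply hv
  simpa [W, ← Matrix.mul_assoc, pinv_mul_cancel hF'] using congrArg (pinv F' * ·) hW0

lemma norm_mul_pinv_mul_one_sub_le (hF : IsUnit (Fᵀ * F)) (hF' : IsUnit (F'ᵀ * F')) :
    ‖F * pinv F * (1 - F' * pinv F')‖ ≤ ‖(1 - F * pinv F) * (F' * pinv F')‖ := by
  set P := F * pinv F
  set Q := F' * pinv F'
  have hP := isStarProjection_mul_pinv hF
  have hQ := isStarProjection_mul_pinv hF'
  rcases lt_or_ge ‖(1 - P) * Q‖ 1 with ht | ht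
  · set K := pinv F * F'
    have hK : K * K⁻¹ = 1 :=
      mul_nonsing_inv K ((isUnit_iff_isUnit_det K).mp (isUnit_pinv_mul_of_norm_lt_one hF' ht))
    -- the oblique projection onto the range of `Q` along the kernel of `P`
    set R := F' * (K⁻¹ * pinv F)
    have hPR : P * R = P := by
      calc P * R = F * (K * K⁻¹) * pinv F := by simp only [P, R, K, Matrix.mul_assoc]
        _ = P := by rw [hK, Matrix.mul_one]
    have hQR : Q * R = R := by
      calc Q * R = F' * (pinv F' * F') * (K⁻¹ * pinv F) := by
            simp only [Q, R, Matrix.mul_assoc]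
        _ = R := by rw [pinv_mul_cancel hF', Matrix.mul_one]
    calc ‖P * (1 - Q)‖ = ‖star ((1 - Q) * P)‖ := by
          rw [star_mul, hP.isSelfAdjoint.star_eq, hQ.one_sub.isSelfAdjoint.star_eq]
      _ = ‖(1 - Q) * P‖ := norm_star _
      _ ≤ ‖(1 - P) * Q‖ := norm_one_sub_mul_le_of_mul_eq hP hQ hPR hQR
  · calc ‖P * (1 - Q)‖ ≤ ‖P‖ * ‖1 - Q‖ := norm_mul_le _ _
      _ ≤ 1 * 1 := by gcongr <;> [exact hP.norm_le _; exact hQ.one_sub.norm_le _]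
      _ ≤ ‖(1 - P) * Q‖ := by rw [one_mul]; exact ht

theorem norm_pinv_sub_pinv_le (hF : IsUnit (Fᵀ * F)) (hF' : IsUnit (F'ᵀ * F')) :
    ‖pinv F - pinv F'‖ ≤ √2 * ‖pinv F‖ * ‖pinv F'‖ * ‖F - F'‖ := by
  set P := F * pinv F
  set Q := F' * pinv F'
  set X := (F' - F) * pinv F'
  set c := ‖F - F'‖ * ‖pinv F'‖
  have hP : IsStarProjection P := isStarProjection_mul_pinv hF
  have hQ : IsStarProjection Q := isStarProjection_mul_pinv hF'
  have hX : ‖X‖ ≤ c := by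
    calc ‖X‖ ≤ ‖F' - F‖ * ‖pinv F'‖ := l2_opNorm_mul _ _
      _ = c := by rw [norm_sub_rev]
  have hY : ‖P * (1 - Q)‖ ≤ c := by
    have hPF : (1 - P) * F = 0 := one_sub_mul_pinv_mul_self hF
    have h1P : (1 - P) * Q = (1 - P) * X := by
      calc (1 - P) * Q = (1 - P) * Q - (1 - P) * F * pinv F' := by
            rw [hPF, Matrix.zero_mul, sub_zero]
        _ = (1 - P) * X := by simp only [Q, X, Matrix.sub_mul, Matrix.mul_sub, Matrix.mul_assoc]
    calc ‖P * (1 - Q)‖ ≤ ‖(1 - P) * Q‖ := norm_mul_pinv_mul_one_sub_le hF hF'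
      _ ≤ ‖1 - P‖ * ‖X‖ := h1P ▸ l2_opNorm_mul _ _
      _ ≤ 1 * c := by gcongr; exact hP.one_sub.norm_le _
      _ = c := one_mul c
  have hsplit : pinv F - pinv F' = pinv F * (X + P * (1 - Q)) := by
    simp only [X, P, Q, Matrix.mul_add, Matrix.mul_sub, Matrix.sub_mul, Matrix.mul_one,
      ← Matrix.mul_assoc, pinv_mul_cancel hF, Matrix.one_mul]
    abel
  -- `X` vanishes on the complement of the range of `Q`, where `P * (1 - Q)` lives.
  have horth : X * star (P * (1 - Q)) = 0 := by
    have hXQ : X * (1 - Q) = 0 := by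
      rw [Matrix.mul_assoc, pinv_mul_one_sub_mul_pinv hF', Matrix.mul_zero]
    rw [star_mul, hP.isSelfAdjoint.star_eq, hQ.one_sub.isSelfAdjoint.star_eq,
      ← Matrix.mul_assoc, hXQ, Matrix.zero_mul]
  have hmid : ‖X + P * (1 - Q)‖ ≤ √2 * c := by
    refine (sq_le_sq₀ (norm_nonneg _) (by positivity)).1 ?_
    rw [mul_pow, Real.sq_sqrt zero_le_two]
    nlinarith [norm_add_sq_le_of_mul_star_eq_zero horth, norm_nonneg X,
      norm_nonneg (P * (1 - Q))]
  calc ‖pinv F - pinv F'‖ ≤ ‖pinv F‖ * (√2 * c) :=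
        hsplit ▸ (l2_opNorm_mul _ _).trans (by gcongr)
    _ = √2 * ‖pinv F‖ * ‖pinv F'‖ * ‖F - F'‖ := by ring

end Wedin

lemma spNorm_eq_l2_opNorm {m n : ℕ} (M : Matrix (Fin m) (Fin n) ℝ) : spNorm M = ‖M‖ := rfl

section Blocks

variable {p l r : ℕ}

lemma firstRows_sub (A B : Matrix (Fin (p + l)) (Fin r) ℝ) :
    firstRows (A - B) = firstRows A - firstRows B := rfl

lemma lastRows_sub (A B : Matrix (Fin (p + l)) (Fin r) ℝ) :
    lastRows (A - B) = lastRows A - lastRows B := rfl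

lemma firstRows_mul (A : Matrix (Fin (p + l)) (Fin r) ℝ) (B : Matrix (Fin r) (Fin r) ℝ) :
    firstRows (A * B) = firstRows A * B := rfl

lemma lastRows_mul (A : Matrix (Fin (p + l)) (Fin r) ℝ) (B : Matrix (Fin r) (Fin r) ℝ) :
    lastRows (A * B) = lastRows A * B := rfl

lemma norm_firstRows_le (A : Matrix (Fin (p + l)) (Fin r) ℝ) : ‖firstRows A‖ ≤ ‖A‖ :=
  l2_opNorm_submatrix_le A (Fin.castAdd_injective p l)

lemma norm_lastRows_le (A : Matrix (Fin (p + l)) (Fin r) ℝ) : ‖lastRows A‖ ≤ ‖A‖ :=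
  l2_opNorm_submatrix_le A (Fin.strictMono_addNat l).injective

theorem norm_pinv_firstRows_mul_lastRows_sub_le (U V : Matrix (Fin (p + l)) (Fin r) ℝ)
    (hV : Vᵀ * V = 1) (hUf : IsUnit ((firstRows U)ᵀ * firstRows U))
    (hVf : IsUnit ((firstRows V)ᵀ * firstRows V)) :
    ‖pinv (firstRows U) * lastRows U - pinv (firstRows V) * lastRows V‖ ≤
      ‖pinv (firstRows U)‖ * ‖U - V‖ * (1 + √2 * ‖pinv (firstRows V)‖) := by
  have hsplit : pinv (firstRows U) * lastRows U - pinv (firstRows V) * lastRows V =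
      pinv (firstRows U) * lastRows (U - V) +
        (pinv (firstRows U) - pinv (firstRows V)) * lastRows V := by
    rw [lastRows_sub, Matrix.mul_sub, Matrix.sub_mul]
    abel
  have hVl : ‖lastRows V‖ ≤ 1 := (norm_lastRows_le V).trans
    (l2_opNorm_le_one_of_conjTranspose_mul_self_eq_one
      (by rwa [conjTranspose_eq_transpose_of_trivial]))
  have hpinv := norm_pinv_sub_pinv_le hUf hVf
  rw [← firstRows_sub] at hpinv
  rw [hsplit]
  calc _ ≤ ‖pinv (firstRows U)‖ * ‖lastRows (U - V)‖ +
        ‖pinv (firstRows U) - pinv (firstRows V)‖ * ‖lastRows V‖ :=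
        (norm_add_le _ _).trans (add_le_add (l2_opNorm_mul _ _) (l2_opNorm_mul _ _))
    _ ≤ ‖pinv (firstRows U)‖ * ‖U - V‖ +
        √2 * ‖pinv (firstRows U)‖ * ‖pinv (firstRows V)‖ * ‖U - V‖ * 1 := by
        gcongr
        · exact norm_lastRows_le _
        · exact hpinv.trans (by gcongr; exact norm_firstRows_le _)
    _ = _ := by ring

end Blocks

theorem system_matrix_perturbation_general (p l r : ℕ)
    (U Uh : Matrix (Fin (p + l)) (Fin r) ℝ)
    (hUh : Uhᵀ * Uh = 1)
    (Z : Matrix (Fin r) (Fin r) ℝ) (hZ : Zᵀ * Z = 1)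
    (hrank : (firstRows U).rank = r) (hrankh : (firstRows Uh).rank = r) :
    spNorm (pinv (firstRows U) * lastRows U -
        Z * (pinv (firstRows Uh) * lastRows Uh) * Zᵀ) ≤
      spNorm (pinv (firstRows U)) * spNorm (U - Uh * Zᵀ) *
        (1 + Real.sqrt 2 * spNorm (pinv (firstRows Uh))) := by
  have hZZ : Z * Zᵀ = 1 := mul_eq_one_comm.mp hZ
  have hV : (Uh * Zᵀ)ᵀ * (Uh * Zᵀ) = 1 := by
    rw [transpose_mul, transpose_transpose, Matrix.mul_assoc, ← Matrix.mul_assoc Uhᵀ, hUh,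
      Matrix.one_mul, hZZ]
  have hpinv : pinv (firstRows (Uh * Zᵀ)) = Z * pinv (firstRows Uh) := pinv_mul_transpose hZ _
  have hrankV : (firstRows (Uh * Zᵀ)).rank = r := by
    rw [firstRows_mul, rank_mul_eq_left_of_isUnit_det _ _ (by
      rw [det_transpose]; exact isUnit_det_of_left_inverse hZ), hrankh]
  have hUf := isUnit_transpose_mul_self_of_rank_eq (hrank.trans (Fintype.card_fin r).symm)
  have hVf := isUnit_transpose_mul_self_of_rank_eq (hrankV.trans (Fintype.card_fin r).symm)
  have hmain := norm_pinv_firstRows_mul_lastRows_sub_le U (Uh * Zᵀ) hV hUf hVf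
  rw [hpinv, lastRows_mul, ← Matrix.mul_assoc, Matrix.mul_assoc Z] at hmain
  simp only [spNorm_eq_l2_opNorm]
  refine hmain.trans ?_
  gcongr
  calc ‖Z * pinv (firstRows Uh)‖ ≤ ‖Z‖ * ‖pinv (firstRows Uh)‖ := l2_opNorm_mul _ _
    _ ≤ 1 * ‖pinv (firstRows Uh)‖ := by
        gcongr
        exact l2_opNorm_le_one_of_conjTranspose_mul_self_eq_one
          (by rwa [conjTranspose_eq_transpose_of_trivial])
    _ = ‖pinv (firstRows Uh)‖ := one_mul _

/-- For `Z` orthogonal and `Υ_f, Υ̂_f` of full column rank `r`,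
with `A_r = Υ_f^† Υ_l` and `Â_r = Υ̂_f^† Υ̂_l`,
`‖A_r − Z Â_r Zᵀ‖₂ ≤ ‖Υ_f^†‖₂ ‖U − Û Zᵀ‖₂ (1 + √2 ‖Υ̂_f^†‖₂)`. -/
theorem system_matrix_perturbation (p l r : ℕ) (hp : 1 ≤ p) (hl : 1 ≤ l)
    (U Uh : Matrix (Fin (p + l)) (Fin r) ℝ)
    (hU : Uᵀ * U = 1) (hUh : Uhᵀ * Uh = 1)
    (Z : Matrix (Fin r) (Fin r) ℝ) (hZ : Zᵀ * Z = 1)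
    (hrank : (firstRows U).rank = r) (hrankh : (firstRows Uh).rank = r) :
    spNorm (pinv (firstRows U) * lastRows U -
        Z * (pinv (firstRows Uh) * lastRows Uh) * Zᵀ) ≤
      spNorm (pinv (firstRows U)) * spNorm (U - Uh * Zᵀ) *
        (1 + Real.sqrt 2 * spNorm (pinv (firstRows Uh))) :=
  system_matrix_perturbation_general p l r U Uh hUh Z hZ hrank hrankh
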